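/- Coordinate form of Thm. 5.9 (lightlike geodesics are shared): Let L : Ω → ℝ be as in the context, with metric spray G^L. Let Z : Ω → ℝ^n be smooth, positively 2-homogeneous in y, and divisible by L, i.e. Z = L · Z̃ for some smooth Z̃ : Ω → ℝ^n. If γ is a C² curve with (γ(t), γ̇(t)) ∈ Ω solving the L-geodesic equation γ̈^i + 2 (G^L)^i(γ, γ̇) = 0 and whose initial velocity is lightlike, L(γ(0), γ̇(0)) = 0, then γ also solves γ̈^i + 2 [ (G^L)^i + Z^i ](γ, γ̇) = 0; that is, the L-geodesic starting at a lightlike vector coincides with the geodesic of the nonlinear connection N = N^L + ∂̇Z with the same initial condition. (For symmetric proper solutions of the paper's affine equation, Z is automatically divisible by L, so this is Thm. 5.9.) -/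

import Mathlib

open scoped BigOperators

noncomputable section

/-- A point of `ℝ^n × ℝ^n` (base coordinates `x`, fiber coordinates `y`). -/
abbrev Pt (n : ℕ) : Type := (Fin n → ℝ) × (Fin n → ℝ)

/-- Partial derivative `∂f/∂x^i` in the base variables. -/
def pdx {n : ℕ} (f : Pt n → ℝ) (i : Fin n) : Pt n → ℝ :=
  fun p => fderiv ℝ f p (Pi.single i 1, 0)

/-- Partial derivative `∂f/∂y^i` in the fiber variables. -/
def pdy {n : ℕ} (f : Pt n → ℝ) (i : Fin n) : Pt n → ℝ :=
  fun p => fderiv ℝ f p (0, Pi.single i 1)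

/-- Fundamental tensor `g_ij(x,y) = (1/2) ∂²L/∂y^i∂y^j`. -/
def gmet2 {n : ℕ} (L : Pt n → ℝ) (p : Pt n) : Matrix (Fin n) (Fin n) ℝ :=
  Matrix.of fun i j => (1 / 2) * pdy (pdy L i) j p

/-- Inverse fundamental tensor `g^{ij}`. -/
def ginv2 {n : ℕ} (L : Pt n → ℝ) (p : Pt n) : Matrix (Fin n) (Fin n) ℝ :=
  (gmet2 L p)⁻¹

/-- Metric spray `(G^L)^i = (1/4) g^{ia} (2 ∂g_{ab}/∂x^c − ∂g_{bc}/∂x^a) y^b y^c`. -/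
def spray {n : ℕ} (L : Pt n → ℝ) (p : Pt n) (i : Fin n) : ℝ :=
  (1 / 4) * ∑ a, ginv2 L p i a *
    ∑ b, ∑ c, (2 * pdx (fun q => gmet2 L q a b) c p - pdx (fun q => gmet2 L q b c) a p)
      * p.2 b * p.2 c

/-- Metric nonlinear connection `(N^L)_i^k = ∂(G^L)^k/∂y^i`. -/
def metricConn {n : ℕ} (L : Pt n → ℝ) (p : Pt n) (i k : Fin n) : ℝ :=
  pdy (fun q => spray L q k) i p

/-- Horizontal derivative `δ_i f = ∂f/∂x^i − N_i^a ∂f/∂y^a`. -/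
def deltaH {n : ℕ} (N : Pt n → Fin n → Fin n → ℝ) (i : Fin n) (f : Pt n → ℝ) (p : Pt n) : ℝ :=
  pdx f i p - ∑ a, N p i a * pdy f a p

/-- Ricci scalar `Ric[N] = y^b (δ_a N_b^a − δ_b N_a^a)` of a nonlinear connection. -/
def RicciScalar {n : ℕ} (N : Pt n → Fin n → Fin n → ℝ) (p : Pt n) : ℝ :=
  ∑ b, p.2 b *
    ((∑ a, deltaH N a (fun q => N q b a) p) - (∑ a, deltaH N b (fun q => N q a a) p))

/-- `γ` is an `N`-geodesic on the interval `I`: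
`γ` is `C²` on `I`, `(γ, γ̇)` stays in `Ω`, and `γ̈^k + N^k_a(γ,γ̇) γ̇^a = 0` on `I`. -/
def IsGeodesicOn {n : ℕ} (Ω : Set (Pt n)) (N : Pt n → Fin n → Fin n → ℝ)
    (γ : ℝ → Fin n → ℝ) (I : Set ℝ) : Prop :=
  ContDiffOn ℝ 2 γ I ∧ (∀ t ∈ I, (γ t, deriv γ t) ∈ Ω) ∧
    ∀ t ∈ I, ∀ k, deriv (fun s => deriv γ s k) t
      + ∑ a, N (γ t, deriv γ t) a k * deriv γ t a = 0

/-!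
The Lagrangian is conserved along its own geodesics. Euler's theorem for the 2-homogeneous `L`
and the 1-homogeneous `∂L/∂y` gives `g_ij y^j = ½ ∂L/∂y^i` and `L = g_ij y^i y^j`; differentiating
the latter in `x` and contracting the spray with `∂L/∂y` yields `2 G^i ∂L/∂y^i = y^a ∂L/∂x^a`, which
is exactly the vanishing of `d/dt L(γ, γ̇)` when `γ̈ = -2 G(γ, γ̇)`. So a geodesic with lightlike
initial velocity stays lightlike, `Z = L Z̃` vanishes along it, and both geodesic equations agree.
-/

open Finset Matrix Filter Topology

variable {n : ℕ}

def IsConic (Ω : Set (Pt n)) : Prop :=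
  ∀ p ∈ Ω, ∀ t : ℝ, 0 < t → (p.1, t • p.2) ∈ Ω

def IsFiberHomogeneousOn (Ω : Set (Pt n)) (k : ℕ) (f : Pt n → ℝ) : Prop :=
  ∀ p ∈ Ω, ∀ t : ℝ, 0 < t → f (p.1, t • p.2) = t ^ k * f p

theorem fderiv_apply_eq_sum_pdx_add_sum_pdy (f : Pt n → ℝ) (p : Pt n) (v w : Fin n → ℝ) :
    fderiv ℝ f p (v, w) = ∑ a, v a * pdx f a p + ∑ i, w i * pdy f i p := by
  classical
  have hvw : ((v, w) : Pt n) = ∑ a, v a • ((Pi.single a 1, 0) : Pt n)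
      + ∑ i, w i • ((0, Pi.single i 1) : Pt n) := by
    conv_lhs => rw [pi_eq_sum_univ' v, pi_eq_sum_univ' w]
    ext1 <;> simp [Prod.fst_sum, Prod.snd_sum]
  rw [hvw, map_add, map_sum, map_sum]
  simp only [map_smul, smul_eq_mul, pdx, pdy]

theorem IsFiberHomogeneousOn.sum_mul_pdy {Ω : Set (Pt n)} {k : ℕ} {f : Pt n → ℝ}
    (hf : IsFiberHomogeneousOn Ω k f) {p : Pt n} (hp : p ∈ Ω) (hdf : DifferentiableAt ℝ f p) :
    ∑ i, p.2 i * pdy f i p = k * f p := by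
  have hray : HasDerivAt (fun t : ℝ => ((p.1, t • p.2) : Pt n)) (0, p.2) 1 := by
    simpa using (hasDerivAt_const (1 : ℝ) p.1).prodMk ((hasDerivAt_id (1 : ℝ)).smul_const p.2)
  have hcomp : HasDerivAt (fun t : ℝ => f (p.1, t • p.2)) (fderiv ℝ f p (0, p.2)) 1 := by
    have hdf' : HasFDerivAt f (fderiv ℝ f p) ((p.1, (1 : ℝ) • p.2) : Pt n) := by
      simpa using hdf.hasFDerivAt
    exact hdf'.comp_hasDerivAt 1 hray
  have hpow : HasDerivAt (fun t : ℝ => f (p.1, t • p.2)) (k * f p) 1 := by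
    refine ((hasDerivAt_pow k (1 : ℝ)).mul_const (f p)).congr_of_eventuallyEq ?_ |>.congr_deriv
      (by simp)
    filter_upwards [eventually_gt_nhds one_pos] with t ht using hf p hp t ht
  simpa [fderiv_apply_eq_sum_pdx_add_sum_pdy] using hcomp.unique hpow

theorem isFiberHomogeneousOn_pdy {Ω : Set (Pt n)} (hΩ : IsOpen Ω) (hΩc : IsConic Ω) {k : ℕ}
    {f : Pt n → ℝ} (hf : IsFiberHomogeneousOn Ω (k + 1) f) (hdf : DifferentiableOn ℝ f Ω)
    (i : Fin n) : IsFiberHomogeneousOn Ω k (pdy f i) := by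
  intro p hp t ht
  set M : Pt n →L[ℝ] Pt n := (ContinuousLinearMap.id ℝ _).prodMap (t • ContinuousLinearMap.id ℝ _)
  have hM : ∀ q : Pt n, M q = (q.1, t • q.2) := fun q => rfl
  have hfM : f ∘ M =ᶠ[𝓝 p] fun q => t ^ (k + 1) * f q := by
    filter_upwards [hΩ.mem_nhds hp] with q hq using hf q hq t ht
  have hdiff : ∀ q ∈ Ω, HasFDerivAt f (fderiv ℝ f q) q := fun q hq =>
    (hdf.differentiableAt (hΩ.mem_nhds hq)).hasFDerivAt
  have hchain : HasFDerivAt (f ∘ M) ((fderiv ℝ f (M p)).comp M) p :=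
    (hdiff _ (hΩc p hp t ht)).comp p M.hasFDerivAt
  have hscaled : HasFDerivAt (f ∘ M) (t ^ (k + 1) • fderiv ℝ f p) p :=
    ((hdiff p hp).const_mul _).congr_of_eventuallyEq hfM
  have key := congrArg (· (0, Pi.single i 1)) (hchain.unique hscaled)
  simp only [ContinuousLinearMap.comp_apply, FunLike.coe_smul, Pi.smul_apply, hM] at key
  have hdir : ((0 : Fin n → ℝ), t • Pi.single i (1 : ℝ)) = t • ((0, Pi.single i 1) : Pt n) := by
    simp
  rw [hdir, map_smul] at key
  simp only [pdy, smul_eq_mul] at key ⊢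
  rw [pow_succ] at key
  exact mul_left_cancel₀ ht.ne' (by linarith)

theorem contDiffAt_pdy {m : WithTop ℕ∞} {f : Pt n → ℝ} {p : Pt n} (hf : ContDiffAt ℝ (m + 1) f p)
    (i : Fin n) : ContDiffAt ℝ m (pdy f i) p :=
  (hf.fderiv_right le_rfl).clm_apply contDiffAt_const

theorem pdy_pdy_comm {f : Pt n → ℝ} {p : Pt n} (hf : ContDiffAt ℝ 2 f p) (i j : Fin n) :
    pdy (pdy f i) j p = pdy (pdy f j) i p := by
  have hdf : DifferentiableAt ℝ (fderiv ℝ f) p :=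
    (hf.fderiv_right (m := 1) le_rfl).differentiableAt one_ne_zero
  have hsecond : ∀ v w : Pt n, fderiv ℝ (fun q => fderiv ℝ f q v) p w
      = fderiv ℝ (fderiv ℝ f) p w v := fun v w => by
    simp [fderiv_clm_apply hdf (differentiableAt_const v)]
  unfold pdy
  rw [hsecond, hsecond]
  exact hf.isSymmSndFDerivAt (by simp [minSmoothness_of_isRCLikeNormedField]) _ _

theorem pdx_mul_snd {f : Pt n → ℝ} {φ : (Fin n → ℝ) → ℝ} {p : Pt n}
    (hf : DifferentiableAt ℝ f p) (hφ : DifferentiableAt ℝ φ p.2) (a : Fin n) :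
    pdx (fun q => f q * φ q.2) a p = pdx f a p * φ p.2 := by
  have h : HasFDerivAt (fun q : Pt n => f q * φ q.2)
      (f p • (fderiv ℝ φ p.2).comp (ContinuousLinearMap.snd ℝ _ _) + φ p.2 • fderiv ℝ f p) p :=
    hf.hasFDerivAt.mul (hφ.hasFDerivAt.comp p hasFDerivAt_snd)
  simp [pdx, h.fderiv, mul_comm]

theorem pdx_sum {ι : Type*} {s : Finset ι} {f : ι → Pt n → ℝ} {p : Pt n}
    (hf : ∀ b ∈ s, DifferentiableAt ℝ (f b) p) (a : Fin n) :
    pdx (fun q => ∑ b ∈ s, f b q) a p = ∑ b ∈ s, pdx (f b) a p := by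
  simp [pdx, fderiv_fun_sum hf]

theorem gmet2_isSymm {L : Pt n → ℝ} {p : Pt n} (hL : ContDiffAt ℝ 2 L p) : (gmet2 L p).IsSymm :=
  Matrix.IsSymm.ext fun i j => by simp [gmet2, pdy_pdy_comm hL]

theorem contDiffAt_gmet2 {m : WithTop ℕ∞} {L : Pt n → ℝ} {p : Pt n}
    (hL : ContDiffAt ℝ (m + 1 + 1) L p) (b c : Fin n) :
    ContDiffAt ℝ m (fun q => gmet2 L q b c) p :=
  (contDiffAt_pdy (contDiffAt_pdy hL b) c).const_smul (1 / 2 : ℝ)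

section Lagrangian

variable {Ω : Set (Pt n)} {L : Pt n → ℝ}

theorem gmet2_mulVec_snd (hΩ : IsOpen Ω) (hΩc : IsConic Ω) (hL : ContDiffOn ℝ 3 L Ω)
    (hLhom : IsFiberHomogeneousOn Ω 2 L) {p : Pt n} (hp : p ∈ Ω) :
    gmet2 L p *ᵥ p.2 = (1 / 2 : ℝ) • fun i => pdy L i p := by
  ext i
  have hpdy : IsFiberHomogeneousOn Ω 1 (pdy L i) :=
    isFiberHomogeneousOn_pdy hΩ hΩc hLhom (hL.differentiableOn (by norm_num)) i
  have hdiff : DifferentiableAt ℝ (pdy L i) p :=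
    (contDiffAt_pdy (m := 2) (hL.contDiffAt (hΩ.mem_nhds hp)) i).differentiableAt (by norm_num)
  have heuler := hpdy.sum_mul_pdy hp hdiff
  simp only [mulVec, dotProduct, gmet2, of_apply, Pi.smul_apply, smul_eq_mul]
  rw [← one_mul (pdy L i p), ← Nat.cast_one, ← heuler, mul_sum]
  exact sum_congr rfl fun j _ => by ring

theorem lagrangian_eq_sum_gmet2 (hΩ : IsOpen Ω) (hΩc : IsConic Ω) (hL : ContDiffOn ℝ 3 L Ω)
    (hLhom : IsFiberHomogeneousOn Ω 2 L) {p : Pt n} (hp : p ∈ Ω) :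
    L p = ∑ b, ∑ c, gmet2 L p b c * (p.2 b * p.2 c) := by
  have heuler := hLhom.sum_mul_pdy hp
    ((hL.contDiffAt (hΩ.mem_nhds hp)).differentiableAt (by norm_num))
  have hrow (b : Fin n) : ∑ c, gmet2 L p b c * p.2 c = 1 / 2 * pdy L b p :=
    congrFun (gmet2_mulVec_snd hΩ hΩc hL hLhom hp) b
  calc L p = ∑ b, p.2 b * (1 / 2 * pdy L b p) := by
        simp_rw [mul_left_comm _ (1 / 2 : ℝ), ← mul_sum, heuler]
        push_cast
        ring
    _ = ∑ b, ∑ c, gmet2 L p b c * (p.2 b * p.2 c) := by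
        refine sum_congr rfl fun b _ => ?_
        rw [← hrow, mul_sum]
        exact sum_congr rfl fun c _ => by ring

theorem pdx_lagrangian_eq_sum (hΩ : IsOpen Ω) (hΩc : IsConic Ω) (hL : ContDiffOn ℝ 3 L Ω)
    (hLhom : IsFiberHomogeneousOn Ω 2 L) {p : Pt n} (hp : p ∈ Ω) (a : Fin n) :
    pdx L a p = ∑ b, ∑ c, pdx (fun q => gmet2 L q b c) a p * (p.2 b * p.2 c) := by
  have hloc : (fun q => ∑ b, ∑ c, gmet2 L q b c * (q.2 b * q.2 c)) =ᶠ[𝓝 p] L := by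
    filter_upwards [hΩ.mem_nhds hp] with q hq
    exact (lagrangian_eq_sum_gmet2 hΩ hΩc hL hLhom hq).symm
  have hg (b c : Fin n) : DifferentiableAt ℝ (fun q => gmet2 L q b c) p :=
    (contDiffAt_gmet2 (m := 1) (hL.contDiffAt (hΩ.mem_nhds hp)) b c).differentiableAt one_ne_zero
  have hterm (b c : Fin n) : DifferentiableAt ℝ (fun q => gmet2 L q b c * (q.2 b * q.2 c)) p :=
    (hg b c).mul (by fun_prop)
  calc pdx L a p = pdx (fun q => ∑ b, ∑ c, gmet2 L q b c * (q.2 b * q.2 c)) a p := by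
        simp only [pdx, hloc.fderiv_eq]
    _ = ∑ b, ∑ c, pdx (fun q => gmet2 L q b c * (q.2 b * q.2 c)) a p := by
        rw [pdx_sum fun b _ => DifferentiableAt.fun_sum fun c _ => hterm b c]
        exact sum_congr rfl fun b _ => pdx_sum (fun c _ => hterm b c) a
    _ = ∑ b, ∑ c, pdx (fun q => gmet2 L q b c) a p * (p.2 b * p.2 c) :=
        sum_congr rfl fun b _ => sum_congr rfl fun c _ =>
          pdx_mul_snd (φ := fun y => y b * y c) (hg b c) (by fun_prop) a

theorem sum_spray_mul_pdy (hΩ : IsOpen Ω) (hΩc : IsConic Ω) (hL : ContDiffOn ℝ 3 L Ω)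
    (hLhom : IsFiberHomogeneousOn Ω 2 L) {p : Pt n} (hp : p ∈ Ω) (hg : IsUnit (gmet2 L p).det) :
    ∑ i, 2 * spray L p i * pdy L i p = ∑ a, p.2 a * pdx L a p := by
  set g := gmet2 L p
  set P : Fin n → Fin n → Fin n → ℝ := fun b c a => pdx (fun q => gmet2 L q b c) a p
  set T : Fin n → ℝ := fun a => ∑ b, ∑ c, (2 * P a b c - P b c a) * p.2 b * p.2 c
  have hspray : (fun i => spray L p i) = (1 / 4 : ℝ) • (g⁻¹ *ᵥ T) := rfl
  have hpdy : (fun i => pdy L i p) = (2 : ℝ) • (g *ᵥ p.2) := by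
    rw [gmet2_mulVec_snd hΩ hΩc hL hLhom hp, smul_smul]
    norm_num
  have hsymm : gᵀ = g := (gmet2_isSymm ((hL.contDiffAt (hΩ.mem_nhds hp)).of_le (by norm_num))).eq
  have hcancel : (g⁻¹ *ᵥ T) ⬝ᵥ (g *ᵥ p.2) = T ⬝ᵥ p.2 := by
    rw [dotProduct_mulVec, ← mulVec_transpose, hsymm, mulVec_mulVec, mul_nonsing_inv _ hg,
      one_mulVec]
  have hpdx (a : Fin n) : pdx L a p = ∑ b, ∑ c, P b c a * (p.2 b * p.2 c) :=
    pdx_lagrangian_eq_sum hΩ hΩc hL hLhom hp a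
  calc ∑ i, 2 * spray L p i * pdy L i p
        = 2 * ((fun i => spray L p i) ⬝ᵥ fun i => pdy L i p) := by
          simp [dotProduct, mul_sum, mul_assoc]
    _ = T ⬝ᵥ p.2 := by
          rw [hspray, hpdy, smul_dotProduct, dotProduct_smul, hcancel, smul_eq_mul, smul_eq_mul]
          ring
    _ = 2 * ∑ c, p.2 c * pdx L c p - ∑ j, p.2 j * pdx L j p := by
          simp only [dotProduct, T, hpdx, sub_mul, sum_sub_distrib, mul_sum, sum_mul]
          congr 1
          -- cyclic relabelling `(j, b, c) ↦ (c, j, b)` of the `∂g_{jb}/∂x^c` term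
          · refine (sum_congr rfl fun j _ => sum_comm).trans (sum_comm.trans ?_)
            exact sum_congr rfl fun _ _ => sum_congr rfl fun _ _ => sum_congr rfl fun _ _ => by ring
          · exact sum_congr rfl fun _ _ => sum_congr rfl fun _ _ => sum_congr rfl fun _ _ => by ring
    _ = ∑ a, p.2 a * pdx L a p := by ring

theorem hasDerivAt_lagrangian_along_geodesic (hΩ : IsOpen Ω) (hΩc : IsConic Ω)
    (hL : ContDiffOn ℝ 3 L Ω) (hLhom : IsFiberHomogeneousOn Ω 2 L) {γ : ℝ → Fin n → ℝ} {t : ℝ}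
    (hγ : DifferentiableAt ℝ γ t) (hγ' : DifferentiableAt ℝ (deriv γ) t)
    (hγΩ : (γ t, deriv γ t) ∈ Ω) (hg : IsUnit (gmet2 L (γ t, deriv γ t)).det)
    (hgeo : ∀ i, deriv (fun s => deriv γ s i) t + 2 * spray L (γ t, deriv γ t) i = 0) :
    HasDerivAt (fun s => L (γ s, deriv γ s)) 0 t := by
  have hacc : HasDerivAt (deriv γ) (fun i => -(2 * spray L (γ t, deriv γ t) i)) t :=
    hasDerivAt_pi.2 fun i => (differentiableAt_pi.1 hγ' i).hasDerivAt.congr_deriv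
      (by linarith [hgeo i])
  have hLd : HasFDerivAt L (fderiv ℝ L (γ t, deriv γ t)) (γ t, deriv γ t) :=
    ((hL.contDiffAt (hΩ.mem_nhds hγΩ)).differentiableAt (by norm_num)).hasFDerivAt
  have hspray := sum_spray_mul_pdy hΩ hΩc hL hLhom hγΩ hg
  have hchain := hLd.comp_hasDerivAt t (hγ.hasDerivAt.prodMk hacc)
  have hzero : fderiv ℝ L (γ t, deriv γ t)
      (deriv γ t, fun i => -(2 * spray L (γ t, deriv γ t) i)) = 0 := by
    simp [fderiv_apply_eq_sum_pdx_add_sum_pdy, neg_mul, sum_neg_distrib, hspray]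
  rwa [hzero] at hchain

theorem lagrangian_along_geodesic_eq (hΩ : IsOpen Ω) (hΩc : IsConic Ω)
    (hL : ContDiffOn ℝ 3 L Ω) (hLhom : IsFiberHomogeneousOn Ω 2 L)
    (hg : ∀ p ∈ Ω, IsUnit (gmet2 L p).det) {γ : ℝ → Fin n → ℝ} {I : Set ℝ} (hI : IsOpen I)
    (hIc : IsPreconnected I) (hγ : ContDiffOn ℝ 2 γ I) (hγΩ : ∀ t ∈ I, (γ t, deriv γ t) ∈ Ω)
    (hgeo : ∀ t ∈ I, ∀ i, deriv (fun s => deriv γ s i) t + 2 * spray L (γ t, deriv γ t) i = 0)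
    {t₀ t : ℝ} (ht₀ : t₀ ∈ I) (ht : t ∈ I) :
    L (γ t, deriv γ t) = L (γ t₀, deriv γ t₀) := by
  obtain ⟨hγd, -, hγ'⟩ := (contDiffOn_succ_iff_deriv_of_isOpen (n := 1) hI).1 hγ
  have hderiv (s : ℝ) (hs : s ∈ I) : HasDerivAt (fun s => L (γ s, deriv γ s)) 0 s :=
    hasDerivAt_lagrangian_along_geodesic hΩ hΩc hL hLhom
      (hγd.differentiableAt (hI.mem_nhds hs))
      ((hγ'.differentiableOn one_ne_zero).differentiableAt (hI.mem_nhds hs))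
      (hγΩ s hs) (hg _ (hγΩ s hs)) (hgeo s hs)
  exact hI.is_const_of_deriv_eq_zero hIc
    (fun s hs => (hderiv s hs).differentiableAt.differentiableWithinAt)
    (fun s hs => (hderiv s hs).deriv) ht ht₀

end Lagrangian

theorem lightlike_geodesics_shared_general
    {n : ℕ} (Ω : Set (Pt n)) (hΩopen : IsOpen Ω)
    (hΩconic : ∀ p ∈ Ω, ∀ t : ℝ, 0 < t → (p.1, t • p.2) ∈ Ω)
    (L : Pt n → ℝ)
    (hLsmooth : ContDiffOn ℝ (⊤ : ℕ∞) L Ω)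
    (hLhom : ∀ p ∈ Ω, ∀ t : ℝ, 0 < t → L (p.1, t • p.2) = t ^ 2 * L p)
    (hginv : ∀ p ∈ Ω, IsUnit (gmet2 L p).det)
    (Z : Pt n → Fin n → ℝ)
    (Zt : Pt n → Fin n → ℝ)
    (hdiv : ∀ p ∈ Ω, Z p = L p • Zt p)
    (γ : ℝ → Fin n → ℝ) (I : Set ℝ) (hIopen : IsOpen I) (hIconv : Convex ℝ I)
    (hI0 : (0 : ℝ) ∈ I)
    (hγC2 : ContDiffOn ℝ 2 γ I)
    (hγΩ : ∀ t ∈ I, (γ t, deriv γ t) ∈ Ω)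
    (hγgeo : ∀ t ∈ I, ∀ i,
      deriv (fun s => deriv γ s i) t + 2 * spray L (γ t, deriv γ t) i = 0)
    (hlight : L (γ 0, deriv γ 0) = 0) :
    ∀ t ∈ I, ∀ i,
      deriv (fun s => deriv γ s i) t
        + 2 * (spray L (γ t, deriv γ t) i + Z (γ t, deriv γ t) i) = 0 := by
  have hL : ContDiffOn ℝ 3 L Ω := hLsmooth.of_le (WithTop.coe_le_coe.2 le_top)
  intro t ht i
  have hlight_t : L (γ t, deriv γ t) = 0 := hlight ▸
    lagrangian_along_geodesic_eq hΩopen hΩconic hL hLhom hginv hIopen hIconv.isPreconnected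
      hγC2 hγΩ hγgeo hI0 ht
  have hZ : Z (γ t, deriv γ t) i = 0 := by simp [hdiv _ (hγΩ t ht), hlight_t]
  linarith [hγgeo t ht i]

/-- **Coordinate form of Thm. 5.9** (lightlike geodesics are shared). If `Z` is smooth,
2-homogeneous in `y` and divisible by `L` (`Z = L Z̃` with `Z̃` smooth), then every
`L`-geodesic with lightlike initial velocity also solves the geodesic equation of the
spray `G^L + Z`, i.e. of the nonlinear connection `N = N^L + ∂̇Z`. -/
theorem lightlike_geodesics_shared
    {n : ℕ} (Ω : Set (Pt n)) (hΩopen : IsOpen Ω)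
    (hΩconic : ∀ p ∈ Ω, ∀ t : ℝ, 0 < t → (p.1, t • p.2) ∈ Ω)
    (hΩnz : ∀ p ∈ Ω, p.2 ≠ 0)
    (L : Pt n → ℝ)
    (hLsmooth : ContDiffOn ℝ (⊤ : ℕ∞) L Ω)
    (hLhom : ∀ p ∈ Ω, ∀ t : ℝ, 0 < t → L (p.1, t • p.2) = t ^ 2 * L p)
    (hginv : ∀ p ∈ Ω, IsUnit (gmet2 L p).det)
    (Z : Pt n → Fin n → ℝ)
    (hZsmooth : ContDiffOn ℝ (⊤ : ℕ∞) Z Ω)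
    (hZhom : ∀ p ∈ Ω, ∀ t : ℝ, 0 < t → Z (p.1, t • p.2) = t ^ 2 • Z p)
    (Zt : Pt n → Fin n → ℝ)
    (hZtsmooth : ContDiffOn ℝ (⊤ : ℕ∞) Zt Ω)
    (hdiv : ∀ p ∈ Ω, Z p = L p • Zt p)
    (γ : ℝ → Fin n → ℝ) (I : Set ℝ) (hIopen : IsOpen I) (hIconv : Convex ℝ I)
    (hI0 : (0 : ℝ) ∈ I)
    (hγC2 : ContDiffOn ℝ 2 γ I)
    (hγΩ : ∀ t ∈ I, (γ t, deriv γ t) ∈ Ω)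
    (hγgeo : ∀ t ∈ I, ∀ i,
      deriv (fun s => deriv γ s i) t + 2 * spray L (γ t, deriv γ t) i = 0)
    (hlight : L (γ 0, deriv γ 0) = 0) :
    ∀ t ∈ I, ∀ i,
      deriv (fun s => deriv γ s i) t
        + 2 * (spray L (γ t, deriv γ t) i + Z (γ t, deriv γ t) i) = 0 :=
  lightlike_geodesics_shared_general Ω hΩopen hΩconic L hLsmooth hLhom hginv Z Zt hdiv γ I hIopen
    hIconv hI0 hγC2 hγΩ hγgeo hlight
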